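/- arXiv:2407.02412 — 3 statements merged into one kernel-verified Lean document; each statement's English description precedes it below -/
import Mathlib

section
/- Let k ≥ 2 and let T be any k-leaf root of the diamond graph on vertex set {b, v1, v2, v3} where v1 v3 is the unique non-edge. Then the distance in T between the leaves b and v2 is not equal to k. -/
open SimpleGraph

/-- A vertex of a graph is a leaf if it has exactly one neighbor. -/
def IsLeafVert {W : Type} (T : SimpleGraph W) (w : W) : Prop := ∃! u, T.Adj w u

/-- `T` (a finite tree on vertex type `W`) together with the injection `f` of the
vertices of `G` onto the leaves of `T` is a `k`-leaf root of `G`:  the leaves of `T`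
are exactly the image of `f`, and two distinct vertices of `G` are adjacent iff
their distance in `T` is at most `k`. -/
def IsLeafRoot {V W : Type} (G : SimpleGraph V) (k : ℕ)
    (T : SimpleGraph W) (f : V → W) : Prop :=
  Finite W ∧ T.IsTree ∧ Function.Injective f ∧
    (∀ w : W, (∃ v, f v = w) ↔ IsLeafVert T w) ∧
    (∀ u v : V, u ≠ v → (G.Adj u v ↔ T.dist (f u) (f v) ≤ k))

/-- `G` is a `k`-leaf power: it admits a `k`-leaf root. -/
def IsKLeafPower {V : Type} (G : SimpleGraph V) (k : ℕ) : Prop :=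
  ∃ (W : Type) (T : SimpleGraph W) (f : V → W), IsLeafRoot G k T f

/-- `m_T(v)`: the minimum over all `u ≠ v` of the distance in the leaf root `T`
between the leaves corresponding to `u` and `v`. -/
noncomputable def mval {V W : Type} (T : SimpleGraph W) (f : V → W) (v : V) : ℕ :=
  sInf {d | ∃ u, u ≠ v ∧ T.dist (f u) (f v) = d}

/-- A vertex has degree at least three. -/
def HasDegreeGEThree {W : Type} (T : SimpleGraph W) (w : W) : Prop :=
  ∃ a b c : W, a ≠ b ∧ a ≠ c ∧ b ≠ c ∧ T.Adj w a ∧ T.Adj w b ∧ T.Adj w c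

/-- A spine of a tree: a path containing every vertex of degree at least 3.  A tree
having a spine is exactly a caterpillar subdivision. -/
def IsSpine {W : Type} (T : SimpleGraph W) {a b : W} (p : T.Walk a b) : Prop :=
  p.IsPath ∧ ∀ w : W, HasDegreeGEThree T w → w ∈ p.support

/-- A linear `k`-leaf root: a `k`-leaf root whose tree is a caterpillar subdivision. -/
def IsLinearLeafRoot {V W : Type} (G : SimpleGraph V) (k : ℕ)
    (T : SimpleGraph W) (f : V → W) : Prop :=
  IsLeafRoot G k T f ∧ ∃ (a b : W) (p : T.Walk a b), IsSpine T p

/-- `G` is a linear `k`-leaf power: it admits a linear `k`-leaf root. -/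
def IsLinearKLeafPower {V : Type} (G : SimpleGraph V) (k : ℕ) : Prop :=
  ∃ (W : Type) (T : SimpleGraph W) (f : V → W), IsLinearLeafRoot G k T f

/-- A cycle of length `n` in `G`, given as an injective map from `ZMod n` with
consecutive images adjacent. -/
def IsCycleIn {V : Type} (G : SimpleGraph V) (n : ℕ) (f : ZMod n → V) : Prop :=
  Function.Injective f ∧ ∀ i : ZMod n, G.Adj (f i) (f (i + 1))

/-- `G` is chordal: every cycle of length at least 4 has a chord. -/
def Chordal {V : Type} (G : SimpleGraph V) : Prop :=
  ∀ n : ℕ, 4 ≤ n → ∀ f : ZMod n → V, IsCycleIn G n f →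
    ∃ i j : ZMod n, j ≠ i ∧ j ≠ i + 1 ∧ j ≠ i - 1 ∧ G.Adj (f i) (f j)

/-- `G` is strongly chordal: chordal, and every even cycle of length at least 6 has
an odd chord (a chord joining two vertices an odd distance apart along the cycle). -/
def StronglyChordal {V : Type} (G : SimpleGraph V) : Prop :=
  Chordal G ∧ ∀ n : ℕ, 6 ≤ n → Even n → ∀ f : ZMod n → V, IsCycleIn G n f →
    ∃ i j : ZMod n, Odd ((j - i).val) ∧ j ≠ i + 1 ∧ j ≠ i - 1 ∧ G.Adj (f i) (f j)

/-- The diamond: the complete graph on `{b, v1, v2, v3} = {0, 1, 2, 3}` minus the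
single edge `v1 v3 = {1, 3}`. -/
def diamond : SimpleGraph (Fin 4) :=
  SimpleGraph.fromRel (fun a _ => a = 0 ∨ a = 2)


section TreeAux

variable {W : Type} {T : SimpleGraph W}

lemma tree_path_length_eq (hT : T.IsTree) {x y : W} {p : T.Walk x y} (hp : p.IsPath) :
    p.length = T.dist x y := by
  classical
  refine le_antisymm ?_ (SimpleGraph.dist_le p)
  obtain ⟨q, hq⟩ := hT.isConnected.exists_walk_length_eq_dist x y
  have huniq : (⟨p, hp⟩ : T.Path x y) = ⟨q.bypass, q.bypass_isPath⟩ :=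
    hT.IsAcyclic.path_unique _ _
  have : p.length = q.bypass.length := by
    simpa using congrArg (fun r : T.Path x y => r.1.length) huniq
  calc p.length = q.bypass.length := this
    _ ≤ q.length := q.length_bypass_le
    _ = T.dist x y := hq

lemma tree_split (hT : T.IsTree) {x y m : W} {p : T.Walk x y} (hp : p.IsPath)
    (hm : m ∈ p.support) : T.dist x m + T.dist m y = T.dist x y := by
  classical
  have h1 := tree_path_length_eq hT (hp.takeUntil hm)
  have h2 := tree_path_length_eq hT (hp.dropUntil hm)
  have h3 := tree_path_length_eq hT hp
  have h4 := congrArg SimpleGraph.Walk.length (p.take_spec hm)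
  rw [SimpleGraph.Walk.length_append] at h4
  omega

lemma tree_pair (hT : T.IsTree) {x y m1 m3 : W} {p : T.Walk x y} (hp : p.IsPath)
    (h1 : m1 ∈ p.support) (h3 : m3 ∈ p.support) :
    T.dist x m1 + T.dist m1 m3 = T.dist x m3 ∨
      T.dist x m3 + T.dist m3 m1 = T.dist x m1 := by
  classical
  have h3'' : m3 ∈ ((p.takeUntil m1 h1).append (p.dropUntil m1 h1)).support := by
    rw [p.take_spec h1]; exact h3
  have h3' := (SimpleGraph.Walk.mem_support_append_iff _ _).mp h3''
  rcases h3' with h | h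
  · exact Or.inr (tree_split hT (hp.takeUntil h1) h)
  · left
    have e1 := tree_split hT (hp.dropUntil h1) h
    have e2 := tree_split hT hp h1
    have e3 := tree_split hT hp h3
    omega

lemma first_meet (S : List W) :
    ∀ {z x' : W} (q : T.Walk z x'), x' ∈ S → ∃ (m : W) (r : T.Walk z m) (s : T.Walk m x'),
      m ∈ S ∧ q = r.append s ∧ ∀ w ∈ r.support, w ∈ S → w = m := by
  intro z x' q
  induction q with
  | nil =>
    intro hx
    exact ⟨_, SimpleGraph.Walk.nil, SimpleGraph.Walk.nil, hx, rfl,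
      by intro w hw _; simpa using hw⟩
  | @cons a b c hadj q ih =>
    intro hx
    by_cases ha : a ∈ S
    · exact ⟨a, SimpleGraph.Walk.nil, SimpleGraph.Walk.cons hadj q, ha, rfl,
        by intro w hw _; simpa using hw⟩
    · obtain ⟨m, r, s, hm, heq, hfirst⟩ := ih hx
      refine ⟨m, SimpleGraph.Walk.cons hadj r, s, hm, by rw [heq]; rfl, ?_⟩
      intro w hw hwp
      rw [SimpleGraph.Walk.support_cons, List.mem_cons] at hw
      rcases hw with rfl | hw
      · exact absurd hwp ha
      · exact hfirst w hw hwp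

lemma tree_median (hT : T.IsTree) {x y : W} (z : W) (p : T.Walk x y) (hp : p.IsPath) :
    ∃ m ∈ p.support, T.dist z m + T.dist m x = T.dist z x ∧
      T.dist z m + T.dist m y = T.dist z y := by
  classical
  obtain ⟨q0⟩ := hT.isConnected z x
  set q := q0.bypass with hqdef
  have hq : q.IsPath := q0.bypass_isPath
  obtain ⟨m, r, s, hm, heq, hfirst⟩ := first_meet p.support q p.start_mem_support
  have hr : r.IsPath := SimpleGraph.Walk.IsPath.of_append_left (heq ▸ hq)
  have hs : s.IsPath := SimpleGraph.Walk.IsPath.of_append_right (heq ▸ hq)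
  have hzm : T.dist z m = r.length := (tree_path_length_eq hT hr).symm
  have hmx : T.dist m x = s.length := (tree_path_length_eq hT hs).symm
  have hzx : T.dist z x = q.length := (tree_path_length_eq hT hq).symm
  have hlen : q.length = r.length + s.length := by
    rw [heq, SimpleGraph.Walk.length_append]
  refine ⟨m, hm, by omega, ?_⟩
  -- construct a path from z to y through m
  have hd : (p.dropUntil m hm).IsPath := hp.dropUntil hm
  have hpath : (r.append (p.dropUntil m hm)).IsPath := by
    rw [SimpleGraph.Walk.isPath_def, SimpleGraph.Walk.support_append]
    refine List.Nodup.append hr.support_nodup ?_ ?_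
    · exact hd.support_nodup.tail
    · intro w hwr hwt
      have hwp : w ∈ p.support :=
        p.support_dropUntil_subset hm (List.mem_of_mem_tail hwt)
      have : w = m := hfirst w hwr hwp
      subst this
      have := hd.support_nodup
      rw [SimpleGraph.Walk.support_eq_cons] at this
      exact (List.nodup_cons.mp this).1 hwt
  have hzy : T.dist z y = (r.append (p.dropUntil m hm)).length :=
    (tree_path_length_eq hT hpath).symm
  have hmy : T.dist m y = (p.dropUntil m hm).length :=
    (tree_path_length_eq hT (hp.dropUntil hm)).symm
  rw [SimpleGraph.Walk.length_append] at hzy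
  omega

end TreeAux

theorem diamond_dist_ne (k : ℕ) (hk : 2 ≤ k)
    (W : Type) (T : SimpleGraph W) (f : Fin 4 → W)
    (hroot : IsLeafRoot diamond k T f) :
    T.dist (f 0) (f 2) ≠ k := by
  classical
  obtain ⟨hfin, htree, hinj, hleaf, hadj⟩ := hroot
  intro h02
  have dAdj : ∀ u v : Fin 4, diamond.Adj u v ↔ (u ≠ v ∧ (u = 0 ∨ u = 2 ∨ v = 0 ∨ v = 2)) := by
    intro u v
    rw [diamond, SimpleGraph.fromRel_adj]
    tauto
  have conn := htree.isConnected
  have h01 : T.dist (f 0) (f 1) ≤ k := (hadj 0 1 (by decide)).mp ((dAdj 0 1).mpr (by decide))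
  have h03 : T.dist (f 0) (f 3) ≤ k := (hadj 0 3 (by decide)).mp ((dAdj 0 3).mpr (by decide))
  have h12 : T.dist (f 1) (f 2) ≤ k := (hadj 1 2 (by decide)).mp ((dAdj 1 2).mpr (by decide))
  have h23 : T.dist (f 2) (f 3) ≤ k := (hadj 2 3 (by decide)).mp ((dAdj 2 3).mpr (by decide))
  have h13 : ¬ T.dist (f 1) (f 3) ≤ k := fun hle =>
    (by decide : ¬ ((1:Fin 4) ≠ 3 ∧ ((1:Fin 4) = 0 ∨ (1:Fin 4) = 2 ∨ (3:Fin 4) = 0 ∨ (3:Fin 4) = 2)))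
      ((dAdj 1 3).mp ((hadj 1 3 (by decide)).mpr hle))
  obtain ⟨w0⟩ := conn (f 0) (f 2)
  set p := w0.bypass with hpdef
  have hp : p.IsPath := w0.bypass_isPath
  obtain ⟨m1, hm1, e1a, e1b⟩ := tree_median htree (f 1) p hp
  obtain ⟨m3, hm3, e3a, e3b⟩ := tree_median htree (f 3) p hp
  have s1 : T.dist (f 0) m1 + T.dist m1 (f 2) = T.dist (f 0) (f 2) := tree_split htree hp hm1
  have s3 : T.dist (f 0) m3 + T.dist m3 (f 2) = T.dist (f 0) (f 2) := tree_split htree hp hm3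
  have hpair := tree_pair htree hp hm1 hm3
  have tri1 : T.dist (f 1) (f 3) ≤ T.dist (f 1) m1 + T.dist m1 (f 3) := conn.dist_triangle
  have tri2 : T.dist m1 (f 3) ≤ T.dist m1 m3 + T.dist m3 (f 3) := conn.dist_triangle
  have c1 : T.dist m1 (f 0) = T.dist (f 0) m1 := SimpleGraph.dist_comm
  have c2 : T.dist m3 (f 0) = T.dist (f 0) m3 := SimpleGraph.dist_comm
  have c3 : T.dist m3 m1 = T.dist m1 m3 := SimpleGraph.dist_comm
  have c4 : T.dist m3 (f 3) = T.dist (f 3) m3 := SimpleGraph.dist_comm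
  have c5 : T.dist (f 1) (f 2) = T.dist (f 2) (f 1) := SimpleGraph.dist_comm
  have c6 : T.dist (f 3) (f 0) = T.dist (f 0) (f 3) := SimpleGraph.dist_comm
  have c7 : T.dist (f 1) (f 0) = T.dist (f 0) (f 1) := SimpleGraph.dist_comm
  have c8 : T.dist (f 3) (f 2) = T.dist (f 2) (f 3) := SimpleGraph.dist_comm
  rcases hpair with hA | hB <;> omega
end

section
/- For every integer k ≥ 4, the diamond graph on vertex set {b, v1, v2, v3} with unique non-edge v1 v3 admits a k-leaf root T such that m_T(b) = k−1 (in particular the minimum tree-distance from b to the other three leaves is attained and equals k−1). -/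
/-!
Embed the root in the lattice `ℤ²` as a comb: a spine from `(0, 0)` to `(k + 1, 0)`, a pendant
vertex `(2, -1)` below it, and a tooth of height `t = ⌊(k - 1) / 2⌋` rising from column `k - t`.
Leaf `b` is the tip of the tooth, `v1`, `v3` the ends of the spine and `v2` the pendant vertex.
Every path of this tree is monotone in both coordinates, so its tree metric is the `ℓ¹` metric,
and the distances from `b` to `v1, v2, v3` are `k, k - 1, 2t + 1`, those from `v1` to `v2, v3`
are `3, k + 1`, and `v2 v3` is at distance `k`. Since `2t + 1 ∈ {k - 1, k}`, only `v1 v3` is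
farther apart than `k`, and the leaf nearest to `b` is `v2`, at distance `k - 1`.
-/

open SimpleGraph

namespace SimpleGraph

variable {V : Type*} {G : SimpleGraph V}

lemma reachable_of_exists_adj_lt (h : V → ℕ) (r : V)
    (hstep : ∀ v, v ≠ r → ∃ w, G.Adj v w ∧ h w < h v) (v : V) : G.Reachable v r := by
  induction hv : h v using Nat.strong_induction_on generalizing v with
  | _ n ih =>
    by_cases hvr : v = r
    · exact hvr ▸ Reachable.refl v
    · obtain ⟨w, hvw, hw⟩ := hstep v hvr
      exact hvw.reachable.trans (ih (h w) (hv ▸ hw) w rfl)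

/-- A cycle would have a vertex of maximal height, and its two neighbours on the cycle would be
two distinct lower neighbours. -/
lemma isAcyclic_of_unique_adj_lt (h : V → ℕ) (hne : ∀ v w, G.Adj v w → h v ≠ h w)
    (huniq : ∀ v a b, G.Adj v a → G.Adj v b → h a < h v → h b < h v → a = b) :
    G.IsAcyclic := by
  classical
  intro u c hc
  obtain ⟨v, hv, hmax⟩ := c.support.toFinset.exists_max_image h ⟨u, by simp⟩
  rw [List.mem_toFinset] at hv
  have hc' : (c.rotate v hv).IsCycle := hc.rotate hv
  have hlt : ∀ w, G.Adj v w → w ∈ (c.rotate v hv).support → h w < h v := fun w hvw hw =>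
    lt_of_le_of_ne (hmax w (List.mem_toFinset.2 ((c.mem_support_rotate_iff v hv).1 hw)))
      (hne v w hvw).symm
  have hsnd := Walk.adj_snd hc'.not_nil
  have hpen := (Walk.adj_penultimate hc'.not_nil).symm
  exact hc'.snd_ne_penultimate <| huniq v _ _ hsnd hpen
    (hlt _ hsnd (Walk.getVert_mem_support ..)) (hlt _ hpen (Walk.getVert_mem_support ..))

lemma Walk.sub_le_length_of_lipschitz (φ : V → ℤ) (hφ : ∀ x y, G.Adj x y → φ x ≤ φ y + 1)
    {u v : V} (p : G.Walk u v) : φ u - φ v ≤ p.length := by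
  induction p with
  | nil => simp
  | cons hxy q ih => have := hφ _ _ hxy; push_cast [Walk.length_cons]; omega

lemma dist_le_of_exists_adj (ρ : V → V → ℕ)
    (hstep : ∀ u v, u ≠ v → ∃ w, G.Adj u w ∧ ρ w v < ρ u v) (u v : V) :
    G.dist u v ≤ ρ u v := by
  suffices ∀ n u, ρ u v = n → ∃ p : G.Walk u v, p.length ≤ n by
    obtain ⟨p, hp⟩ := this _ u rfl
    exact (dist_le p).trans hp
  intro n
  induction n using Nat.strong_induction_on with
  | _ n ih =>
    intro u hu
    by_cases huv : u = v
    · exact huv ▸ ⟨.nil, Nat.zero_le _⟩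
    · obtain ⟨w, huw, hw⟩ := hstep u v huv
      obtain ⟨p, hp⟩ := ih _ (hu ▸ hw) w rfl
      exact ⟨.cons huw p, by rw [Walk.length_cons]; omega⟩

end SimpleGraph

def taxicab (p q : ℤ × ℤ) : ℕ := (p.1 - q.1).natAbs + (p.2 - q.2).natAbs

lemma taxicab_self (p : ℤ × ℤ) : taxicab p p = 0 := by simp [taxicab]

noncomputable abbrev gridGraph (S : Set (ℤ × ℤ)) : SimpleGraph S :=
  (hasse (ℤ × ℤ)).induce S

lemma gridGraph_adj {S : Set (ℤ × ℤ)} {u v : S} :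
    (gridGraph S).Adj u v ↔ taxicab u v = 1 := by
  obtain ⟨⟨x, y⟩, _⟩ := u
  obtain ⟨⟨x', y'⟩, _⟩ := v
  simp only [comap_adj, hasse_prod, Function.Embedding.subtype_apply, boxProd_adj, hasse_adj,
    Order.covBy_iff_add_one_eq, taxicab]
  omega

lemma taxicab_le_dist {S : Set (ℤ × ℤ)} (hS : (gridGraph S).Connected) (u v : S) :
    taxicab u v ≤ (gridGraph S).dist u v := by
  obtain ⟨p, hp⟩ := hS.exists_walk_length_eq_dist u v
  have := p.sub_le_length_of_lipschitz (fun w : S => (taxicab w v : ℤ)) fun x y hxy => by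
    rw [gridGraph_adj] at hxy; simp only [taxicab] at *; omega
  rw [taxicab_self] at this
  omega

def comb (n a c s t : ℤ) : Set (ℤ × ℤ) :=
  {p | (p.2 = 0 ∧ 0 ≤ p.1 ∧ p.1 ≤ n) ∨ (p.1 = a ∧ -s ≤ p.2 ∧ p.2 ≤ 0) ∨
    (p.1 = c ∧ 0 ≤ p.2 ∧ p.2 ≤ t)}

section Comb

variable {n a c s t : ℤ}

lemma mem_comb {p : ℤ × ℤ} : p ∈ comb n a c s t ↔ (p.2 = 0 ∧ 0 ≤ p.1 ∧ p.1 ≤ n) ∨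
    (p.1 = a ∧ -s ≤ p.2 ∧ p.2 ≤ 0) ∨ (p.1 = c ∧ 0 ≤ p.2 ∧ p.2 ≤ t) := Iff.rfl

lemma finite_comb : (comb n a c s t).Finite :=
  (Set.finite_Icc (min (min 0 a) c, min (-s) 0) (max (max n a) c, max t 0)).subset fun p hp => by
    rw [mem_comb] at hp
    simp only [Set.mem_Icc, Prod.le_def]
    omega

lemma gridGraph_comb_connected (ha : 0 ≤ a) (han : a ≤ n) (hc : 0 ≤ c) (hcn : c ≤ n) :
    (gridGraph (comb n a c s t)).Connected := by
  have h0 : ((0, 0) : ℤ × ℤ) ∈ comb n a c s t := by rw [mem_comb]; omega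
  rw [connected_iff_exists_forall_reachable]
  refine ⟨⟨(0, 0), h0⟩, fun v => (reachable_of_exists_adj_lt
    (fun w : comb n a c s t => taxicab w (0, 0)) _ ?_ v).symm⟩
  rintro ⟨⟨x, y⟩, hv⟩ hv0
  rw [mem_comb] at hv
  have hv0' : (x, y) ≠ (0, 0) := fun h => hv0 (Subtype.ext h)
  simp only [ne_eq, Prod.mk.injEq] at hv0'
  obtain ⟨p, hp, hadj, hlt⟩ : ∃ p ∈ comb n a c s t,
      taxicab (x, y) p = 1 ∧ taxicab p (0, 0) < taxicab (x, y) (0, 0) := by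
    rcases lt_trichotomy y 0 with hy | hy | hy
    · refine ⟨(x, y + 1), ?_, ?_, ?_⟩ <;> simp only [mem_comb, taxicab] at * <;> omega
    · refine ⟨(x - 1, y), ?_, ?_, ?_⟩ <;> simp only [mem_comb, taxicab] at * <;> omega
    · refine ⟨(x, y - 1), ?_, ?_, ?_⟩ <;> simp only [mem_comb, taxicab] at * <;> omega
  exact ⟨⟨p, hp⟩, gridGraph_adj.2 hadj, hlt⟩

lemma comb_eq_of_taxicab_lt {v p q : ℤ × ℤ}
    (hv : v ∈ comb n a c s t) (hp : p ∈ comb n a c s t) (hq : q ∈ comb n a c s t)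
    (hvp : taxicab v p = 1) (hvq : taxicab v q = 1)
    (hpv : taxicab p (0, 0) < taxicab v (0, 0)) (hqv : taxicab q (0, 0) < taxicab v (0, 0)) :
    p = q := by
  obtain ⟨x, y⟩ := v
  obtain ⟨x₁, y₁⟩ := p
  obtain ⟨x₂, y₂⟩ := q
  simp only [mem_comb, taxicab, Prod.mk.injEq] at *
  omega

lemma gridGraph_comb_isAcyclic : (gridGraph (comb n a c s t)).IsAcyclic := by
  refine isAcyclic_of_unique_adj_lt (fun w : comb n a c s t => taxicab w (0, 0)) ?_ ?_
  · intro v w hvw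
    rw [gridGraph_adj] at hvw
    simp only [taxicab] at *
    omega
  · intro v p q hvp hvq hpv hqv
    rw [gridGraph_adj] at hvp hvq
    exact Subtype.ext (comb_eq_of_taxicab_lt v.2 p.2 q.2 hvp hvq hpv hqv)

lemma gridGraph_comb_isTree (ha : 0 ≤ a) (han : a ≤ n) (hc : 0 ≤ c) (hcn : c ≤ n) :
    (gridGraph (comb n a c s t)).IsTree :=
  ⟨gridGraph_comb_connected ha han hc hcn, gridGraph_comb_isAcyclic⟩

lemma exists_mem_comb_taxicab_lt (ha : 0 ≤ a) (han : a ≤ n) (hc : 0 ≤ c) (hcn : c ≤ n)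
    {u v : ℤ × ℤ} (hu : u ∈ comb n a c s t) (hv : v ∈ comb n a c s t) (huv : u ≠ v) :
    ∃ w ∈ comb n a c s t, taxicab u w = 1 ∧ taxicab w v < taxicab u v := by
  obtain ⟨x, y⟩ := u
  obtain ⟨x', y'⟩ := v
  simp only [ne_eq, Prod.mk.injEq] at huv
  rcases lt_trichotomy y 0 with hy | hy | hy
  · by_cases h : x' = x ∧ y' < y
    · refine ⟨(x, y - 1), ?_, ?_, ?_⟩ <;> simp only [mem_comb, taxicab] at * <;> omega
    · refine ⟨(x, y + 1), ?_, ?_, ?_⟩ <;> simp only [mem_comb, taxicab] at * <;> omega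
  · rcases lt_trichotomy x' x with hx | hx | hx
    · refine ⟨(x - 1, y), ?_, ?_, ?_⟩ <;> simp only [mem_comb, taxicab] at * <;> omega
    · by_cases h : y' < 0
      · refine ⟨(x, -1), ?_, ?_, ?_⟩ <;> simp only [mem_comb, taxicab] at * <;> omega
      · refine ⟨(x, 1), ?_, ?_, ?_⟩ <;> simp only [mem_comb, taxicab] at * <;> omega
    · refine ⟨(x + 1, y), ?_, ?_, ?_⟩ <;> simp only [mem_comb, taxicab] at * <;> omega
  · by_cases h : x' = x ∧ y < y'
    · refine ⟨(x, y + 1), ?_, ?_, ?_⟩ <;> simp only [mem_comb, taxicab] at * <;> omega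
    · refine ⟨(x, y - 1), ?_, ?_, ?_⟩ <;> simp only [mem_comb, taxicab] at * <;> omega

lemma gridGraph_comb_dist (ha : 0 ≤ a) (han : a ≤ n) (hc : 0 ≤ c) (hcn : c ≤ n)
    (u v : comb n a c s t) : (gridGraph (comb n a c s t)).dist u v = taxicab u v := by
  refine le_antisymm (dist_le_of_exists_adj (fun u v : comb n a c s t => taxicab u v) ?_ u v)
    (taxicab_le_dist (gridGraph_comb_connected ha han hc hcn) u v)
  intro u v huv
  obtain ⟨w, hw, hadj, hlt⟩ :=
    exists_mem_comb_taxicab_lt ha han hc hcn u.2 v.2 (Subtype.coe_injective.ne huv)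
  exact ⟨⟨w, hw⟩, gridGraph_adj.2 hadj, hlt⟩

lemma isLeafVert_gridGraph_comb_iff (ha : 0 < a) (han : a < n) (hc : 0 < c) (hcn : c < n)
    (hs : 0 < s) (ht : 0 < t) (w : comb n a c s t) :
    IsLeafVert (gridGraph (comb n a c s t)) w ↔
      w.1 = (c, t) ∨ w.1 = (0, 0) ∨ w.1 = (a, -s) ∨ w.1 = (n, 0) := by
  obtain ⟨⟨x, y⟩, hw⟩ := w
  have hmem := mem_comb.1 hw
  constructor
  · intro hleaf
    by_contra hne
    obtain ⟨p, q, hp, hq, hwp, hwq, hpq⟩ : ∃ p q : ℤ × ℤ, p ∈ comb n a c s t ∧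
        q ∈ comb n a c s t ∧ taxicab (x, y) p = 1 ∧ taxicab (x, y) q = 1 ∧ p ≠ q := by
      rcases lt_trichotomy y 0 with hy | hy | hy
      · refine ⟨(x, y - 1), (x, y + 1), ?_, ?_, ?_, ?_, ?_⟩ <;>
          simp only [mem_comb, taxicab, ne_eq, Prod.mk.injEq] at * <;> omega
      · refine ⟨(x - 1, y), (x + 1, y), ?_, ?_, ?_, ?_, ?_⟩ <;>
          simp only [mem_comb, taxicab, ne_eq, Prod.mk.injEq] at * <;> omega
      · refine ⟨(x, y - 1), (x, y + 1), ?_, ?_, ?_, ?_, ?_⟩ <;>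
          simp only [mem_comb, taxicab, ne_eq, Prod.mk.injEq] at * <;> omega
    exact hpq (congrArg Subtype.val (hleaf.unique (y₁ := ⟨p, hp⟩) (y₂ := ⟨q, hq⟩)
      (gridGraph_adj.2 hwp) (gridGraph_adj.2 hwq)))
  · intro h
    simp only [Prod.mk.injEq] at h
    obtain ⟨p, hp, hwp, huniq⟩ : ∃ p ∈ comb n a c s t, taxicab (x, y) p = 1 ∧
        ∀ q ∈ comb n a c s t, taxicab (x, y) q = 1 → q = p := by
      rcases h with h | h | h | h
      · refine ⟨(c, t - 1), ?_, ?_, fun ⟨q₁, q₂⟩ hq hwq => ?_⟩ <;>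
          simp only [mem_comb, taxicab, Prod.mk.injEq, true_and] at * <;> omega
      · refine ⟨(1, 0), ?_, ?_, fun ⟨q₁, q₂⟩ hq hwq => ?_⟩ <;>
          simp only [mem_comb, taxicab, Prod.mk.injEq, true_and] at * <;> omega
      · refine ⟨(a, -s + 1), ?_, ?_, fun ⟨q₁, q₂⟩ hq hwq => ?_⟩ <;>
          simp only [mem_comb, taxicab, Prod.mk.injEq, true_and] at * <;> omega
      · refine ⟨(n - 1, 0), ?_, ?_, fun ⟨q₁, q₂⟩ hq hwq => ?_⟩ <;>
          simp only [mem_comb, taxicab, Prod.mk.injEq, true_and] at * <;> omega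
    exact ⟨⟨p, hp⟩, gridGraph_adj.2 hwp,
      fun q hq => Subtype.ext (huniq q.1 q.2 (gridGraph_adj.1 hq))⟩

end Comb

abbrev diamondComb (k : ℕ) : Set (ℤ × ℤ) :=
  comb (k + 1) 2 (k - (k - 1) / 2 : ℕ) 1 ((k - 1) / 2 : ℕ)

def diamondLeaf (k : ℕ) : Fin 4 → diamondComb k :=
  ![⟨((k - (k - 1) / 2 : ℕ), ((k - 1) / 2 : ℕ)), Or.inr (Or.inr ⟨rfl, by positivity, le_rfl⟩)⟩,
    ⟨(0, 0), Or.inl ⟨rfl, le_rfl, by positivity⟩⟩,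
    ⟨(2, -1), Or.inr (Or.inl ⟨rfl, le_rfl, by norm_num⟩)⟩,
    ⟨(k + 1, 0), Or.inl ⟨rfl, by positivity, le_rfl⟩⟩]

lemma dist_diamondLeaf {k : ℕ} (hk : 1 ≤ k) (u v : Fin 4) :
    (gridGraph (diamondComb k)).dist (diamondLeaf k u) (diamondLeaf k v) =
      taxicab (diamondLeaf k u) (diamondLeaf k v) :=
  gridGraph_comb_dist (by omega) (by omega) (by omega) (by omega) _ _

lemma diamondLeaf_injective {k : ℕ} (hk : 1 ≤ k) : Function.Injective (diamondLeaf k) := by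
  intro u v huv
  fin_cases u <;> fin_cases v <;>
    simp only [Fin.reduceFinMk, Matrix.cons_val, diamondLeaf, Subtype.ext_iff, Prod.mk.injEq]
      at huv ⊢ <;> omega

lemma diamond_adj_iff_taxicab_le {k : ℕ} (hk : 3 ≤ k) {u v : Fin 4} (huv : u ≠ v) :
    diamond.Adj u v ↔ taxicab (diamondLeaf k u) (diamondLeaf k v) ≤ k := by
  fin_cases u <;> fin_cases v <;>
    simp only [Fin.reduceFinMk, Matrix.cons_val, diamondLeaf, diamond, fromRel_adj, taxicab, ne_eq,
      Fin.reduceEq, true_or, or_true, or_self, not_false_eq_true, not_true_eq_false, true_and,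
      true_iff, false_iff] at huv ⊢ <;> omega

lemma sub_one_le_taxicab_diamondLeaf {k : ℕ} {u : Fin 4} (hu : u ≠ 0) :
    k - 1 ≤ taxicab (diamondLeaf k u) (diamondLeaf k 0) := by
  fin_cases u <;>
    simp only [Fin.reduceFinMk, Matrix.cons_val, diamondLeaf, taxicab] at hu ⊢ <;> omega

lemma diamondLeaf_isLeafRoot {k : ℕ} (hk : 3 ≤ k) :
    IsLeafRoot diamond k (gridGraph (diamondComb k)) (diamondLeaf k) := by
  refine ⟨finite_comb.to_subtype,
    gridGraph_comb_isTree (by omega) (by omega) (by omega) (by omega),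
    diamondLeaf_injective (by omega), fun w => ?_, fun u v huv => ?_⟩
  · rw [isLeafVert_gridGraph_comb_iff (by omega) (by omega) (by omega) (by omega) (by omega)
      (by omega)]
    simp [Fin.exists_fin_succ, diamondLeaf, Subtype.ext_iff, eq_comm]
  · rw [dist_diamondLeaf (by omega), diamond_adj_iff_taxicab_le hk huv]

lemma mval_diamondLeaf {k : ℕ} (hk : 3 ≤ k) :
    mval (gridGraph (diamondComb k)) (diamondLeaf k) 0 = k - 1 := by
  refine IsLeast.csInf_eq ⟨⟨2, by decide, ?_⟩, ?_⟩
  · rw [dist_diamondLeaf (by omega)]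
    simp only [diamondLeaf, taxicab, Matrix.cons_val]
    omega
  · rintro _ ⟨u, hu, rfl⟩
    rw [dist_diamondLeaf (by omega)]
    exact sub_one_le_taxicab_diamondLeaf hu

theorem diamond_leaf_root_exists (k : ℕ) (hk : 4 ≤ k) :
    ∃ (W : Type) (T : SimpleGraph W) (f : Fin 4 → W),
      IsLeafRoot diamond k T f ∧ mval T f 0 = k - 1 :=
  ⟨diamondComb k, gridGraph _, diamondLeaf k, diamondLeaf_isLeafRoot (by omega),
    mval_diamondLeaf (by omega)⟩
end

section
/- Fix an odd integer k = 2q+1 ≥ 5 and let I_k be the odd interior gadget. Then for every k-leaf root T of I_k, if m_T(t) = k then m_T(b) = 3. -/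
open SimpleGraph

/-- Vertices of the odd interior gadget for `k = 2q+1`: `t`, `b`,
`x i` for `i : Fin q` (representing `x_{i+1}`), and `y i` for `i : Fin (q-1)`
(representing `y_{i+2}`). -/
inductive IVert (q : ℕ) : Type where
  | t : IVert q
  | b : IVert q
  | x : Fin q → IVert q
  | y : Fin (q - 1) → IVert q

/-- The odd interior gadget `I_k` for odd `k = 2q+1 ≥ 5`: edges `t x_i` and `b x_i`
for all `1 ≤ i ≤ q`, `x_i x_j` for `i < j` (so `X` is a clique), `y_i x_j` for
`2 ≤ i ≤ j ≤ q`, and `b y_q`. -/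
def oddGadget (q : ℕ) : SimpleGraph (IVert q) :=
  SimpleGraph.fromRel (fun u v => match u, v with
    | .t, .x _ => True
    | .b, .x _ => True
    | .x i, .x j => i ≠ j
    | .y a, .x c => (a : ℕ) + 1 ≤ (c : ℕ)
    | .b, .y a => (a : ℕ) = q - 2
    | _, _ => False)

/-!
Measure everything from the leaf `t` through Gromov products
`⟪u | v⟫ = (d(t,u) + d(t,v) - d(u,v)) / 2`, which in a tree satisfy the ultrametric inequality
`min ⟪u | v⟫ ⟪v | w⟫ ≤ ⟪u | w⟫`. Since `m_T(t) = k`, every `x_i` lies at distance exactly `k`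
from `t`, and `y_i` seeing `x_j` for `j > i` but not `x_i` forces `⟪x_i | x_q⟫` to increase
strictly with `i`. As `x_1 x_q` is an edge, `⟪x_1 | x_q⟫ ≥ q + 1`; at the other end
`⟪x_{q-1} | x_q⟫ < ⟪y_q | x_q⟫ < k` because `x_q` is a leaf, so the chain is tight. The edges `b y_q`, `b x_1` and the non-edge `t b` then pin
`d(t,b) = k + 1` and `⟪b | x_q⟫ = k - 1`, i.e. `d(b, x_q) = 3`. No leaf is closer to `b`:
leaves at distance two are twins, while `y_q`, `t` and `x_1` separate `b` from `t`, from the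
`x_i` and from the `y_i` respectively.
-/

namespace SimpleGraph

variable {W : Type*} {T : SimpleGraph W}

/-- In a tree this is the distance from `a` to the path between `u` and `v`, and the division
is exact. -/
noncomputable def gromovProduct (T : SimpleGraph W) (a u v : W) : ℕ :=
  (T.dist a u + T.dist a v - T.dist u v) / 2

theorem gromovProduct_comm (a u v : W) : T.gromovProduct a u v = T.gromovProduct a v u := by
  rw [gromovProduct, gromovProduct, dist_comm (u := u), add_comm (T.dist a u)]

theorem Connected.dist_add_dist_le_of_mem_support (hT : T.Connected) (a : W) {c d m : W}
    (p : T.Walk c d) (hm : m ∈ p.support) :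
    T.dist a c + T.dist a d ≤ 2 * T.dist a m + p.length := by
  classical
  have hlen := congr_arg Walk.length (p.take_spec hm)
  rw [Walk.length_append] at hlen
  have hc := dist_le (p.takeUntil m hm)
  have hd := dist_le (p.dropUntil m hm)
  have hac := hT.dist_triangle (u := a) (v := m) (w := c)
  have had := hT.dist_triangle (u := a) (v := m) (w := d)
  rw [dist_comm (u := m)] at hac
  omega

theorem IsTree.eq_of_adj_of_dist_add_one_eq (hT : T.IsTree) (a : W) {x y z : W}
    (hy : T.Adj y x) (hz : T.Adj z x) (hdy : T.dist a y + 1 = T.dist a x)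
    (hdz : T.dist a z + 1 = T.dist a x) : y = z := by
  obtain ⟨p, hp⟩ := hT.connected.exists_walk_length_eq_dist a y
  obtain ⟨r, hr⟩ := hT.connected.exists_walk_length_eq_dist a z
  have hpx := (p.concat hy).isPath_of_length_eq_dist (by simp [hp, hdy])
  have hrx := (r.concat hz).isPath_of_length_eq_dist (by simp [hr, hdz])
  obtain ⟨h, -⟩ := Walk.concat_inj ((hT.existsUnique_path a x).unique hpx hrx)
  exact h

theorem IsTree.dist_eq_add_length_of_isPath (hT : T.IsTree) (a : W) {c c' d : W}
    (hadj : T.Adj c c') (p : T.Walk c' d) (hp : (Walk.cons hadj p).IsPath)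
    (hup : T.dist a c' = T.dist a c + 1) : T.dist a d = T.dist a c' + p.length := by
  induction p generalizing c with
  | nil => simp
  | @cons c' c'' d hadj' p ih =>
    have hne : c ≠ c'' := by
      rintro rfl
      simp [Walk.cons_isPath_iff] at hp
    rcases hT.dist_eq_dist_add_one_of_adj a hadj' with hdown | hup'
    · exact absurd (hT.eq_of_adj_of_dist_add_one_eq a hadj hadj'.symm hup.symm hdown.symm) hne
    · rw [ih hadj' hp.of_cons hup', Walk.length_cons]
      omega

theorem IsTree.exists_mem_support_dist_add_dist_eq (hT : T.IsTree) (a : W) {c d : W}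
    {p : T.Walk c d} (hp : p.IsPath) :
    ∃ m ∈ p.support, T.dist a c + T.dist a d = 2 * T.dist a m + p.length := by
  induction p with
  | nil => exact ⟨_, Walk.start_mem_support _, by simp; ring⟩
  | @cons c c' d hadj p ih =>
    obtain ⟨m, hm, hsum⟩ := ih hp.of_cons
    rcases hT.dist_eq_dist_add_one_of_adj a hadj with hdown | hup
    · exact ⟨m, by simp [hm], by rw [Walk.length_cons]; omega⟩
    · have := hT.dist_eq_add_length_of_isPath a hadj p hp hup
      exact ⟨c, Walk.start_mem_support _, by rw [Walk.length_cons]; omega⟩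

theorem IsTree.dist_add_two_mul_gromovProduct (hT : T.IsTree) (a u v : W) :
    T.dist u v + 2 * T.gromovProduct a u v = T.dist a u + T.dist a v := by
  obtain ⟨p, hp, hlen⟩ := hT.connected.exists_path_of_dist u v
  obtain ⟨m, -, hm⟩ := hT.exists_mem_support_dist_add_dist_eq a hp
  rw [gromovProduct]
  omega

theorem IsTree.min_gromovProduct_le (hT : T.IsTree) (a u v w : W) :
    min (T.gromovProduct a u v) (T.gromovProduct a v w) ≤ T.gromovProduct a u w := by
  classical
  obtain ⟨p, hp, hplen⟩ := hT.connected.exists_path_of_dist u w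
  obtain ⟨m, hm, hsum⟩ := hT.exists_mem_support_dist_add_dist_eq a hp
  obtain ⟨p₁, -, hp₁⟩ := hT.connected.exists_path_of_dist u v
  obtain ⟨p₂, -, hp₂⟩ := hT.connected.exists_path_of_dist v w
  have hbypass : (p₁.append p₂).bypass = p :=
    (hT.existsUnique_path u w).unique (p₁.append p₂).bypass_isPath hp
  have huw := hT.dist_add_two_mul_gromovProduct a u w
  have huv := hT.dist_add_two_mul_gromovProduct a u v
  have hvw := hT.dist_add_two_mul_gromovProduct a v w
  rw [← hbypass] at hm
  rcases (Walk.mem_support_append_iff _ _).mp (Walk.support_bypass_subset_support _ hm) with h | h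
  · have := hT.connected.dist_add_dist_le_of_mem_support a p₁ h
    omega
  · have := hT.connected.dist_add_dist_le_of_mem_support a p₂ h
    omega

theorem IsTree.dist_eq_dist_add_one_of_isLeaf (hT : T.IsTree) {x c : W} (hxc : T.Adj x c)
    (hleaf : ∀ y, T.Adj x y → y = c) {u : W} (hu : u ≠ x) :
    T.dist u x = T.dist u c + 1 := by
  refine (hT.dist_eq_dist_add_one_of_adj u hxc).resolve_right fun hfar => ?_
  obtain ⟨p, hp⟩ := hT.connected.exists_walk_length_eq_dist u x
  have hnil := Walk.not_nil_of_ne (p := p) hu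
  have hpen : p.penultimate = c := hleaf _ (Walk.adj_penultimate hnil).symm
  have := dist_le p.dropLast
  rw [Walk.length_dropLast, hpen, hp] at this
  omega

theorem IsTree.dist_add_two_le_of_isLeaf (hT : T.IsTree) {x : W} (hx : ∃! c, T.Adj x c)
    {u v : W} (hu : u ≠ x) (hv : v ≠ x) : T.dist u v + 2 ≤ T.dist u x + T.dist x v := by
  obtain ⟨c, hxc, hleaf⟩ := hx
  rw [dist_comm (u := x), hT.dist_eq_dist_add_one_of_isLeaf hxc hleaf hu,
    hT.dist_eq_dist_add_one_of_isLeaf hxc hleaf hv, dist_comm (u := v)]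
  have := hT.connected.dist_triangle (u := u) (v := c) (w := v)
  omega

end SimpleGraph

theorem mval_le_dist {V W : Type} {T : SimpleGraph W} {f : V → W} {u v : V} (huv : u ≠ v) :
    mval T f v ≤ T.dist (f u) (f v) :=
  Nat.sInf_le ⟨u, huv, rfl⟩

theorem mval_eq_of_forall_le {V W : Type} {T : SimpleGraph W} {f : V → W} {u v : V} {n : ℕ}
    (huv : u ≠ v) (hu : T.dist (f u) (f v) = n) (hle : ∀ w, w ≠ v → n ≤ T.dist (f w) (f v)) :
    mval T f v = n :=
  le_antisymm (hu ▸ mval_le_dist huv) (le_csInf ⟨n, u, huv, hu⟩ fun _ ⟨w, hw, hd⟩ => hd ▸ hle w hw)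

namespace IsLeafRoot

variable {V W : Type} {G : SimpleGraph V} {k : ℕ} {T : SimpleGraph W} {f : V → W}

theorem isTree (h : IsLeafRoot G k T f) : T.IsTree := h.2.1

theorem injective (h : IsLeafRoot G k T f) : Function.Injective f := h.2.2.1

theorem isLeafVert (h : IsLeafRoot G k T f) (v : V) : IsLeafVert T (f v) :=
  (h.2.2.2.1 (f v)).mp ⟨v, rfl⟩

theorem adj_iff (h : IsLeafRoot G k T f) {u v : V} (huv : u ≠ v) :
    G.Adj u v ↔ T.dist (f u) (f v) ≤ k :=
  h.2.2.2.2 u v huv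

theorem dist_add_two_le (h : IsLeafRoot G k T f) {u v w : V} (hu : u ≠ v) (hw : w ≠ v) :
    T.dist (f u) (f w) + 2 ≤ T.dist (f u) (f v) + T.dist (f v) (f w) :=
  h.isTree.dist_add_two_le_of_isLeaf (h.isLeafVert v) (h.injective.ne hu) (h.injective.ne hw)

/-- Leaves at distance at most two are equidistant from every other leaf. -/
theorem three_le_dist (h : IsLeafRoot G k T f) {u v w : V} (huv : u ≠ v) (hwu : w ≠ u)
    (hwv : w ≠ v) (hw : ¬(G.Adj w u ↔ G.Adj w v)) : 3 ≤ T.dist (f u) (f v) := by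
  by_contra hlt
  have hu := h.dist_add_two_le hwu huv.symm
  have hv := h.dist_add_two_le hwv huv
  rw [dist_comm (u := f v)] at hv
  exact hw (by rw [h.adj_iff hwu, h.adj_iff hwv]; omega)

theorem adj_iff_dist_add_dist_le (h : IsLeafRoot G k T f) (a : W) {u v : V} (huv : u ≠ v) :
    G.Adj u v ↔ T.dist a (f u) + T.dist a (f v) ≤ k + 2 * T.gromovProduct a (f u) (f v) := by
  have := h.isTree.dist_add_two_mul_gromovProduct a (f u) (f v)
  rw [h.adj_iff huv]
  omega

theorem gromovProduct_lt_dist (h : IsLeafRoot G k T f) {a u x : V} (hax : a ≠ x)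
    (hux : u ≠ x) : T.gromovProduct (f a) (f u) (f x) < T.dist (f a) (f x) := by
  have hleaf := h.dist_add_two_le hax hux
  have := h.isTree.dist_add_two_mul_gromovProduct (f a) (f u) (f x)
  rw [dist_comm (u := f x)] at hleaf
  omega

end IsLeafRoot

section OddGadget

variable {q : ℕ} {W : Type} {T : SimpleGraph W} {f : IVert q → W}

local notation "⟪" u " | " v "⟫" => T.gromovProduct (f IVert.t) (f u) (f v)

theorem oddGadget_dist_t_x (hroot : IsLeafRoot (oddGadget q) (2 * q + 1) T f)
    (ht : mval T f .t = 2 * q + 1) (i : Fin q) : T.dist (f .t) (f (.x i)) = 2 * q + 1 :=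
  le_antisymm ((hroot.adj_iff (by simp)).mp (by simp [oddGadget]))
    (ht ▸ dist_comm (G := T) ▸ mval_le_dist (by simp))

theorem oddGadget_two_mul_gromovProduct_lt (hroot : IsLeafRoot (oddGadget q) (2 * q + 1) T f)
    (ht : mval T f .t = 2 * q + 1) {a : Fin (q - 1)} {i : Fin q} (hia : (i : ℕ) ≤ a) :
    2 * ⟪.y a | .x i⟫ < T.dist (f .t) (f (.y a)) := by
  have hnadj : ¬(oddGadget q).Adj (.y a) (.x i) := by simp [oddGadget]; omega
  rw [hroot.adj_iff_dist_add_dist_le (f .t) (by simp), oddGadget_dist_t_x hroot ht] at hnadj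
  omega

theorem oddGadget_dist_t_y_le (hroot : IsLeafRoot (oddGadget q) (2 * q + 1) T f)
    (ht : mval T f .t = 2 * q + 1) {a : Fin (q - 1)} {j : Fin q} (haj : (a : ℕ) < j) :
    T.dist (f .t) (f (.y a)) ≤ 2 * ⟪.y a | .x j⟫ := by
  have hadj : (oddGadget q).Adj (.y a) (.x j) := by simp [oddGadget]; omega
  rw [hroot.adj_iff_dist_add_dist_le (f .t) (by simp), oddGadget_dist_t_x hroot ht] at hadj
  omega

/-- `y i` sees `x j` and `x l` but not `x i`, so seen from `t` the branch towards `x l` leaves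
the branch towards `x i` strictly before the one towards `x j`. -/
theorem oddGadget_gromovProduct_x_lt (hroot : IsLeafRoot (oddGadget q) (2 * q + 1) T f)
    (ht : mval T f .t = 2 * q + 1) {i j l : Fin q} (hij : i < j) (hjl : j ≤ l) :
    ⟪.x i | .x l⟫ < ⟪.x j | .x l⟫ := by
  have hi : (i : ℕ) < q - 1 := by omega
  have hmiss := oddGadget_two_mul_gromovProduct_lt hroot ht (a := ⟨i, hi⟩) (i := i) le_rfl
  have hsee_j := oddGadget_dist_t_y_le hroot ht (a := ⟨i, hi⟩) (j := j) hij
  have hsee_l := oddGadget_dist_t_y_le hroot ht (a := ⟨i, hi⟩) (j := l) (hij.trans_le hjl)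
  have hmeet_il := hroot.isTree.min_gromovProduct_le (f .t) (f (.y ⟨i, hi⟩)) (f (.x l)) (f (.x i))
  have hmeet_jl := hroot.isTree.min_gromovProduct_le (f .t) (f (.x j)) (f (.y ⟨i, hi⟩)) (f (.x l))
  rw [gromovProduct_comm (u := f (.x l))] at hmeet_il
  rw [gromovProduct_comm (u := f (.x j))] at hmeet_jl
  omega

theorem oddGadget_gromovProduct_x_add_le [NeZero q]
    (hroot : IsLeafRoot (oddGadget q) (2 * q + 1) T f) (ht : mval T f .t = 2 * q + 1)
    {i l : Fin q} (hil : i ≤ l) : ⟪.x 0 | .x l⟫ + i ≤ ⟪.x i | .x l⟫ := by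
  obtain ⟨n, hn⟩ := i
  induction n with
  | zero => simp
  | succ n ih =>
    have hnl : n + 1 ≤ l := hil
    have hprev := ih (by omega) (Fin.mk_le_mk.mpr (by omega))
    have hstep := oddGadget_gromovProduct_x_lt hroot ht (i := ⟨n, by omega⟩) (j := ⟨n + 1, hn⟩)
      (Fin.mk_lt_mk.mpr n.lt_succ_self) hil
    simp only at hprev ⊢
    omega

theorem oddGadget_three_le_dist_b (hroot : IsLeafRoot (oddGadget q) (2 * q + 1) T f)
    (hq : 2 ≤ q) {u : IVert q} (hu : u ≠ .b) : 3 ≤ T.dist (f u) (f .b) := by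
  cases u with
  | t =>
    exact hroot.three_le_dist hu (w := .y ⟨q - 2, by omega⟩) (by simp) (by simp)
      (by simp [oddGadget])
  | b => exact absurd rfl hu
  | x i => exact hroot.three_le_dist hu (w := .t) (by simp) (by simp) (by simp [oddGadget])
  | y a =>
    exact hroot.three_le_dist hu (w := .x ⟨0, by omega⟩) (by simp) (by simp)
      (by simp [oddGadget])

theorem oddGadget_dist_b_x_last (hroot : IsLeafRoot (oddGadget q) (2 * q + 1) T f)
    (ht : mval T f .t = 2 * q + 1) (hq : 2 ≤ q) {z : Fin q} (hz : (z : ℕ) + 1 = q) :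
    T.dist (f .b) (f (.x z)) = 3 := by
  have : NeZero q := ⟨by omega⟩
  obtain ⟨p, hp⟩ : ∃ p : Fin q, (p : ℕ) + 2 = q := ⟨⟨q - 2, by omega⟩, by simp; omega⟩
  obtain ⟨a, ha⟩ : ∃ a : Fin (q - 1), (a : ℕ) = p := ⟨⟨p, by omega⟩, rfl⟩
  have hT := hroot.isTree
  have htz := oddGadget_dist_t_x hroot ht z
  have hchain := oddGadget_gromovProduct_x_add_le hroot ht (i := p) (l := z) (by omega)
  have hymiss := oddGadget_two_mul_gromovProduct_lt hroot ht (a := a) (i := p) ha.ge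
  have hysee := oddGadget_dist_t_y_le hroot ht (a := a) (j := z) (by omega)
  have hyz := hroot.gromovProduct_lt_dist (a := .t) (u := .y a) (x := .x z) (by simp) (by simp)
  have hbz := hroot.gromovProduct_lt_dist (a := .t) (u := .b) (x := .x z) (by simp) (by simp)
  have hz₀ : (0 : Fin q) ≠ z := by rw [Ne, Fin.ext_iff, Fin.val_zero]; omega
  have hx₀z : (oddGadget q).Adj (.x 0) (.x z) := by simp [oddGadget, hz₀]
  have hby : (oddGadget q).Adj .b (.y a) := by simp [oddGadget]; omega
  have hbx₀ : (oddGadget q).Adj .b (.x 0) := by simp [oddGadget]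
  have htb : ¬(oddGadget q).Adj .t .b := by simp [oddGadget]
  rw [hroot.adj_iff_dist_add_dist_le (f .t) (by simpa using hz₀)] at hx₀z
  rw [hroot.adj_iff_dist_add_dist_le (f .t) (by simp)] at hby hbx₀
  rw [hroot.adj_iff (by simp)] at htb
  have hmeet_pz := hT.min_gromovProduct_le (f .t) (f (.y a)) (f (.x z)) (f (.x p))
  have hmeet_bz := hT.min_gromovProduct_le (f .t) (f .b) (f (.y a)) (f (.x z))
  have hmeet_x₀z := hT.min_gromovProduct_le (f .t) (f (.x 0)) (f .b) (f (.x z))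
  have hbz_dist := hT.dist_add_two_mul_gromovProduct (f .t) (f .b) (f (.x z))
  rw [oddGadget_dist_t_x hroot ht] at hx₀z hbx₀
  rw [gromovProduct_comm (u := f (.x z))] at hmeet_pz
  rw [gromovProduct_comm (u := f (.x 0))] at hmeet_x₀z
  have hchain_tight : ⟪.x 0 | .x z⟫ = q + 1 ∧ 4 * q - 1 ≤ T.dist (f .t) (f (.y a)) := by omega
  have hbz_eq : ⟪.b | .x z⟫ = 2 * q := by omega
  -- otherwise `⟪x 0 | b⟫ ≥ q + 2`, and with it `⟪x 0 | x z⟫ ≥ q + 2`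
  have htb_eq : T.dist (f .t) (f .b) = 2 * q + 2 := by omega
  omega

end OddGadget

theorem odd_gadget_forced (q : ℕ) (hq : 2 ≤ q) (k : ℕ) (hk : k = 2 * q + 1)
    (W : Type) (T : SimpleGraph W) (f : IVert q → W)
    (hroot : IsLeafRoot (oddGadget q) k T f)
    (ht : mval T f IVert.t = k) :
    mval T f IVert.b = 3 := by
  subst hk
  exact mval_eq_of_forall_le (u := .x ⟨q - 1, by omega⟩) (by simp)
    (dist_comm.trans (oddGadget_dist_b_x_last hroot ht hq (by simp; omega)))
    fun _ hu => oddGadget_three_le_dist_b hroot hq hu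
end
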